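/- arXiv:2103.08698 — 3 statements merged into one kernel-verified Lean document; each statement's English description precedes it below -/
import Mathlib

section
/- Let G be a graph and let d be a positive integer such that G admits an acyclic orientation with all outdegrees at most d. Then there exist functions f_1, ..., f_d : V(G) → V(G), each guarded by G (i.e., f_i(v) = v or f_i(v) is adjacent to v), such that for all distinct vertices u, v of G: uv ∈ E(G) if and only if there exists i ∈ {1,...,d} with f_i(u) = v or f_i(v) = u. -/
/-- If `G` admits an acyclic orientation `D` with all outdegrees at most `d`, then
there are `d` functions `f 1, …, f d : V → V`, each guarded by `G` (i.e. `f i v = v`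
or `f i v` is adjacent to `v`), such that two distinct vertices `u, v` are adjacent
iff `f i u = v` or `f i v = u` for some `i`. -/
theorem stmt_5 {V : Type*} [Fintype V] (G : SimpleGraph V) (d : ℕ) (hd : 0 < d)
    (D : V → V → Prop)
    (hsub : ∀ u v, D u v → G.Adj u v)
    (hcover : ∀ u v, G.Adj u v ↔ (D u v ∨ D v u))
    (hasym : ∀ u v, D u v → ¬ D v u)
    (hacyc : ∃ rank : V → ℕ, ∀ u v, D u v → rank v < rank u)
    (hout : ∀ v, ({u | D v u} : Set V).ncard ≤ d) :
    ∃ f : Fin d → V → V,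
      (∀ i v, f i v = v ∨ G.Adj v (f i v)) ∧
      (∀ u v, u ≠ v → (G.Adj u v ↔ ∃ i, f i u = v ∨ f i v = u)) := by
  classical
  let s : V → Finset V := fun v => {u | D v u}.toFinset
  have hmem : ∀ v u, u ∈ s v ↔ D v u := by
    intro v u; simp [s]
  have hcard : ∀ v, (s v).card ≤ d := by
    intro v
    have := hout v
    rwa [Set.ncard_eq_toFinset_card'] at this
  let f : Fin d → V → V := fun i v => (s v).toList.getD i v
  have hrange : ∀ (i : Fin d) v, f i v = v ∨ f i v ∈ s v := by
    intro i v
    by_cases h : (i : ℕ) < (s v).toList.length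
    · right
      have : f i v = (s v).toList.get ⟨i, h⟩ := List.getD_eq_get _ _ ⟨i, h⟩
      rw [this, ← Finset.mem_toList]
      exact List.get_mem _ _
    · left
      exact List.getD_eq_default _ _ (le_of_not_gt h)
  have hcov : ∀ v u, u ∈ s v → ∃ i : Fin d, f i v = u := by
    intro v u hu
    rw [← Finset.mem_toList] at hu
    obtain ⟨j, hju⟩ := List.mem_iff_get.mp hu
    have hlen : (s v).toList.length ≤ d := by
      rw [Finset.length_toList]; exact hcard v
    refine ⟨⟨j, lt_of_lt_of_le j.isLt hlen⟩, ?_⟩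
    have : f ⟨j, lt_of_lt_of_le j.isLt hlen⟩ v = (s v).toList.get j :=
      List.getD_eq_get _ _ j
    rw [this, hju]
  refine ⟨f, ?_, ?_⟩
  · intro i v
    rcases hrange i v with h | h
    · exact Or.inl h
    · exact Or.inr (hsub _ _ ((hmem v _).mp h))
  · intro u v huv
    constructor
    · intro hadj
      rcases (hcover u v).mp hadj with h | h
      · obtain ⟨i, hi⟩ := hcov u v ((hmem u v).mpr h)
        exact ⟨i, Or.inl hi⟩
      · obtain ⟨i, hi⟩ := hcov v u ((hmem v u).mpr h)
        exact ⟨i, Or.inr hi⟩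
    · rintro ⟨i, hi | hi⟩
      · rcases hrange i u with h | h
        · exact (huv (h.symm.trans hi)).elim
        · exact ((hcover u v).mpr (Or.inl ((hmem u v).mp (hi ▸ h))))
      · rcases hrange i v with h | h
        · exact (huv.symm (h.symm.trans hi)).elim
        · exact ((hcover u v).mpr (Or.inr ((hmem v u).mp (hi ▸ h))))
end

section
/- Let Q be a rooted forest, let X be a set of terms closed under subterms, and let μ : X → V(Q) be guard-consistent, meaning: whenever t and f(t) both lie in X, μ(t) is an ancestor or descendant of μ(f(t)) in Q. Let t ∈ X be a term with underlying variable z (i.e., z is obtained from t by stripping all function applications), and suppose all subterms of t lie in X. Then there exists a subterm t' of t such that μ(t') is a common ancestor of μ(t) and μ(z) in Q. -/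
private lemma anc_trans {V : Type*} (par : V → V) {a b c : V}
    (h1 : ∃ m, par^[m] a = b) (h2 : ∃ m, par^[m] b = c) : ∃ m, par^[m] a = c := by
  obtain ⟨m, hm⟩ := h1
  obtain ⟨n, hn⟩ := h2
  exact ⟨n + m, by rw [Function.iterate_add_apply, hm, hn]⟩

private lemma anc_chain {V : Type*} (par : V → V) {u a b : V}
    (h1 : ∃ m, par^[m] u = a) (h2 : ∃ m, par^[m] u = b) :
    (∃ m, par^[m] a = b) ∨ (∃ m, par^[m] b = a) := by
  obtain ⟨m, hm⟩ := h1
  obtain ⟨n, hn⟩ := h2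
  rcases le_total m n with h | h
  · left
    exact ⟨n - m, by rw [← hm, ← Function.iterate_add_apply, Nat.sub_add_cancel h, hn]⟩
  · right
    exact ⟨m - n, by rw [← hn, ← Function.iterate_add_apply, Nat.sub_add_cancel h, hm]⟩

private lemma aux6 {V : Type*} (par : V → V) :
    ∀ k (v : ℕ → V), (∀ i < k, (∃ m, par^[m] (v (i + 1)) = v i) ∨
      (∃ m, par^[m] (v i) = v (i + 1))) →
    ∃ i ≤ k, (∃ m, par^[m] (v 0) = v i) ∧ (∃ m, par^[m] (v k) = v i) := by
  intro k
  induction k with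
  | zero => exact fun v _ => ⟨0, le_refl _, ⟨0, rfl⟩, ⟨0, rfl⟩⟩
  | succ k ih =>
    intro v hwalk
    obtain ⟨i, hik, h0, hk⟩ := ih v (fun i hi => hwalk i (by omega))
    rcases hwalk k (by omega) with h | h
    · -- v (k+1) descends to v k
      exact ⟨i, by omega, h0, anc_trans par h hk⟩
    · -- v k descends to v (k+1): v i and v (k+1) are both ancestors of v k
      rcases anc_chain par hk h with hc | hc
      · exact ⟨k + 1, le_refl _, anc_trans par h0 hc, ⟨0, rfl⟩⟩
      · exact ⟨i, by omega, h0, hc⟩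

/-- Observation on guard-consistency: in a rooted forest (parent function `par`
whose ancestor order is antisymmetric), given a sequence `v 0, …, v k` (the images
of the subterms `z = t₀, t₁, …, t_k = t` of a term `t` with variable `z`) in which
consecutive vertices are comparable in the ancestor order, some `v i` is a common
ancestor of `v 0` (= μ(z)) and `v k` (= μ(t)). -/
theorem stmt_6 {V : Type*} (par : V → V)
    (hanti : ∀ u v : V, (∃ k, par^[k] v = u) → (∃ k, par^[k] u = v) → u = v)
    (k : ℕ) (v : Fin (k + 1) → V)
    (hwalk : ∀ i : Fin k, (∃ m, par^[m] (v i.succ) = v i.castSucc) ∨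
      (∃ m, par^[m] (v i.castSucc) = v i.succ)) :
    ∃ i : Fin (k + 1),
      (∃ m, par^[m] (v 0) = v i) ∧ (∃ m, par^[m] (v (Fin.last k)) = v i) := by
  set w : ℕ → V := fun n => v ⟨min n k, by omega⟩ with hw
  have hwalk' : ∀ i < k, (∃ m, par^[m] (w (i + 1)) = w i) ∨
      (∃ m, par^[m] (w i) = w (i + 1)) := by
    intro i hi
    have h1 : w i = v (⟨i, hi⟩ : Fin k).castSucc := by
      simp [hw, Fin.castSucc, Fin.castAdd, Nat.min_eq_left hi.le]
    have h2 : w (i + 1) = v (⟨i, hi⟩ : Fin k).succ := by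
      simp [hw, Fin.succ, Nat.min_eq_left hi]
    rw [h1, h2]
    exact hwalk ⟨i, hi⟩
  obtain ⟨i, hik, h0, hk⟩ := aux6 par k w hwalk'
  refine ⟨⟨i, by omega⟩, ?_, ?_⟩
  · have : w 0 = v 0 := by simp [hw]
    have h2 : w i = v ⟨i, by omega⟩ := by simp [hw, Nat.min_eq_left hik]
    rwa [this, h2] at h0
  · have : w k = v (Fin.last k) := by simp [hw, Fin.last]
    have h2 : w i = v ⟨i, by omega⟩ := by simp [hw, Nat.min_eq_left hik]
    rwa [this, h2] at hk
end

section
/- Let G be a graph, F a scaffolding of G of depth at most d, X a finite set of terms closed under subterms over unary function symbols interpreted as functions guarded by G and restricted so that terms take values in V(F) with the ancestor-comparability property, and ω an assignment of vertices to the variables of X such that the value of every term in X lies in V(F) and the values of any term t and f(t) (when both in X) are comparable in the ancestor order of F. Define μ(t) to be the value of t under ω. Then there exists an X-template (Q, μ') with Q of depth at most d that ω F-matches, where Q is the subforest of F induced (in the ancestor order) by the values of the terms of X together with their pairwise nearest common ancestors and the corresponding roots. -/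
/-- Existence of a matched template: let `F` be a scaffolding of `G` of depth at
most `d` (parent function `par` guarded by `G`), and let the terms of a
subterm-closed set `X` (with immediate-subterm map `sub`) take values `val t ∈ V(F)`
such that the values of `t` and `sub t` are always ancestor-comparable in `F`.
Then there is an `X`-template: a rooted forest `Q` of depth at most `d` with a map
`μ : X → Q` that is guard-consistent, has every leaf of `Q` in its image, together
with an injective homomorphism `h : Q → F` mapping roots to roots and preserving
the parent relation, such that `h (μ t) = val t` for all `t`; i.e. the assignment
`F`-matches the template. -/
theorem stmt_17 {V : Type*} [Fintype V] (G : SimpleGraph V) (d : ℕ)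
    (par : V → V)
    (hdepth : ∀ v, ∃ m, m + 1 ≤ d ∧ par^[m + 1] v = par^[m] v)
    (hguarded : ∀ v, par v = v ∨ G.Adj v (par v))
    (X : Type*) [Fintype X] (sub : X → X) (val : X → V)
    (hcomp : ∀ t, (∃ m, par^[m] (val t) = val (sub t)) ∨
      (∃ m, par^[m] (val (sub t)) = val t)) :
    ∃ (Q : Type) (_ : Fintype Q) (parQ : Q → Q) (μ : X → Q) (h : Q → V),
      (∀ q, ∃ m, m + 1 ≤ d ∧ parQ^[m + 1] q = parQ^[m] q) ∧
      Function.Injective h ∧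
      (∀ q, parQ q = q → par (h q) = h q) ∧
      (∀ q, parQ q ≠ q → h (parQ q) = par (h q)) ∧
      (∀ t, h (μ t) = val t) ∧
      (∀ t, (∃ m, parQ^[m] (μ t) = μ (sub t)) ∨ (∃ m, parQ^[m] (μ (sub t)) = μ t)) ∧
      (∀ q, (∀ q', parQ q' = q → q' = q) → ∃ t, μ t = q) := by
  classical
  -- S : upward closure of the image of val
  set P : V → Prop := fun v => ∃ t m, par^[m] (val t) = v with hP
  let S := {v : V // P v}
  have hpar' : ∀ s : S, P (par s.val) := by
    rintro ⟨v, t, m, hm⟩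
    exact ⟨t, m + 1, by rw [Function.iterate_succ_apply', hm]⟩
  let par' : S → S := fun s => ⟨par s.val, hpar' s⟩
  have hA : ∀ (m : ℕ) (s : S), (par'^[m] s).val = par^[m] s.val := by
    intro m
    induction m with
    | zero => intro s; rfl
    | succ n ih =>
        intro s
        rw [Function.iterate_succ_apply', Function.iterate_succ_apply']
        show par (par'^[n] s).val = _
        rw [ih]
  haveI : Fintype S := Subtype.fintype _
  let e : S ≃ Fin (Fintype.card S) := Fintype.equivFin S
  refine ⟨Fin (Fintype.card S), inferInstance,
    fun q => e (par' (e.symm q)),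
    fun t => e ⟨val t, ⟨t, 0, rfl⟩⟩,
    fun q => (e.symm q).val, ?_, ?_, ?_, ?_, ?_, ?_, ?_⟩
  case _ =>
    -- iterate conjugation lemma, proved inline
    have hB : ∀ (m : ℕ) (q : Fin (Fintype.card S)),
        (fun q => e (par' (e.symm q)))^[m] q = e (par'^[m] (e.symm q)) := by
      intro m
      induction m with
      | zero => intro q; simp
      | succ n ih =>
          intro q
          rw [Function.iterate_succ_apply', ih, Function.iterate_succ_apply']
          simp
    intro q
    obtain ⟨m, hm, hfix⟩ := hdepth (e.symm q).val
    refine ⟨m, hm, ?_⟩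
    rw [hB, hB]
    congr 1
    ext
    rw [hA, hA, hfix]
  case _ =>
    intro q q' hqq'
    exact e.symm.injective (Subtype.ext hqq')
  case _ =>
    intro q hq
    have : par' (e.symm q) = e.symm q := e.injective (by simpa using hq)
    exact congrArg Subtype.val this
  case _ =>
    intro q _
    show (e.symm (e (par' (e.symm q)))).val = _
    rw [e.symm_apply_apply]
  case _ =>
    intro t
    show (e.symm (e _)).val = _
    rw [e.symm_apply_apply]
  case _ =>
    have hB : ∀ (m : ℕ) (q : Fin (Fintype.card S)),
        (fun q => e (par' (e.symm q)))^[m] q = e (par'^[m] (e.symm q)) := by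
      intro m
      induction m with
      | zero => intro q; simp
      | succ n ih =>
          intro q
          rw [Function.iterate_succ_apply', ih, Function.iterate_succ_apply']
          simp
    intro t
    rcases hcomp t with ⟨m, hm⟩ | ⟨m, hm⟩
    · left
      exact ⟨m, by rw [hB]; congr 1; ext; rw [hA]; simpa using hm⟩
    · right
      exact ⟨m, by rw [hB]; congr 1; ext; rw [hA]; simpa using hm⟩
  case _ =>
    intro q hq
    obtain ⟨t, m, hm⟩ := (e.symm q).2
    -- show: if par^[m] (val t) = (e.symm q).val then ∃ t', μ t' = q, by induction on m
    have key : ∀ (m : ℕ) (t : X), par^[m] (val t) = (e.symm q).val →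
        ∃ t', (e ⟨val t', ⟨t', 0, rfl⟩⟩ : Fin (Fintype.card S)) = q := by
      intro m
      induction m with
      | zero =>
          intro t ht
          refine ⟨t, ?_⟩
          have : (⟨val t, ⟨t, 0, rfl⟩⟩ : S) = e.symm q := Subtype.ext ht
          rw [this, e.apply_symm_apply]
      | succ n ih =>
          intro t ht
          set w : S := ⟨par^[n] (val t), ⟨t, n, rfl⟩⟩ with hw
          have hpw : par' w = e.symm q := by
            apply Subtype.ext
            show par (par^[n] (val t)) = _
            rw [← Function.iterate_succ_apply' par n (val t)]
            exact ht
          have : e w = q := hq (e w) (by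
            show e (par' (e.symm (e w))) = q
            rw [e.symm_apply_apply, hpw, e.apply_symm_apply])
          have hwq : w = e.symm q := by rw [← this, e.symm_apply_apply]
          exact ih t (by rw [← hwq])
    exact key m t hm
end
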